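/- arXiv:2210.14080 — 3 statements merged into one kernel-verified Lean document; each statement's English description precedes it below -/
import Mathlib

section
/- The counterfactual error is bounded by the weighted factual error plus the integral probability metric between the weighted observational distribution and the product (fully randomized) distribution: ε_CF ≤ ε_F^w + IPM_G(W·p(X,T,Z), p(X)p(T)p(Z)), provided the loss function ℓ belongs to the function class G. -/
open MeasureTheory

theorem le_add_sSup_abs_sub {α : Type*} {F H : α → ℝ} {G : Set α} {a : α} (ha : a ∈ G)
    (hBdd : BddAbove {r : ℝ | ∃ g ∈ G, r = |F g - H g|}) :
    H a ≤ F a + sSup {r : ℝ | ∃ g ∈ G, r = |F g - H g|} := by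
  have hle : |F a - H a| ≤ sSup {r : ℝ | ∃ g ∈ G, r = |F g - H g|} :=
    le_csSup hBdd ⟨a, ha, rfl⟩
  linarith [neg_abs_le (F a - H a)]

theorem counterfactual_error_bound_general
    {𝒳 𝒯 𝒵 : Type*} [MeasurableSpace 𝒳] [MeasurableSpace 𝒯] [MeasurableSpace 𝒵]
    (μX : Measure 𝒳) (μT : Measure 𝒯) (μZ : Measure 𝒵)
    (pJoint : 𝒳 × 𝒯 × 𝒵 → ℝ) (pX : 𝒳 → ℝ) (pT : 𝒯 → ℝ) (pZ : 𝒵 → ℝ)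
    (W : 𝒳 × 𝒯 × 𝒵 → ℝ) (ℓ : 𝒳 × 𝒯 × 𝒵 → ℝ)
    (G : Set (𝒳 × 𝒯 × 𝒵 → ℝ))
    (hℓG : ℓ ∈ G)
    (hBdd : BddAbove {r : ℝ | ∃ g ∈ G,
      r = |∫ v, g v * (W v * pJoint v) ∂(μX.prod (μT.prod μZ))
            - ∫ v, g v * (pX v.1 * pT v.2.1 * pZ v.2.2) ∂(μX.prod (μT.prod μZ))|}) :
    -- ε_CF ≤ ε_F^w + IPM_G(W·p(X,T,Z), p(X)p(T)p(Z))
    ∫ v, ℓ v * (pX v.1 * pT v.2.1 * pZ v.2.2) ∂(μX.prod (μT.prod μZ))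
      ≤ (∫ v, ℓ v * W v * pJoint v ∂(μX.prod (μT.prod μZ)))
        + sSup {r : ℝ | ∃ g ∈ G,
            r = |∫ v, g v * (W v * pJoint v) ∂(μX.prod (μT.prod μZ))
                  - ∫ v, g v * (pX v.1 * pT v.2.1 * pZ v.2.2) ∂(μX.prod (μT.prod μZ))|} := by
  simp_rw [mul_assoc (ℓ _) (W _)]
  exact le_add_sSup_abs_sub hℓG hBdd

/-- The counterfactual error is bounded by the weighted factual error plus the IPM
between the weighted observational distribution `W·p(X,T,Z)` and the product
(fully randomized) distribution `p(X)p(T)p(Z)`, provided the loss `ℓ` lies in `G`. -/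
theorem counterfactual_error_bound
    {𝒳 𝒯 𝒵 : Type*} [MeasurableSpace 𝒳] [MeasurableSpace 𝒯] [MeasurableSpace 𝒵]
    (μX : Measure 𝒳) (μT : Measure 𝒯) (μZ : Measure 𝒵)
    [SigmaFinite μX] [SigmaFinite μT] [SigmaFinite μZ]
    (pJoint : 𝒳 × 𝒯 × 𝒵 → ℝ) (pX : 𝒳 → ℝ) (pT : 𝒯 → ℝ) (pZ : 𝒵 → ℝ)
    (W : 𝒳 × 𝒯 × 𝒵 → ℝ) (ℓ : 𝒳 × 𝒯 × 𝒵 → ℝ)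
    (G : Set (𝒳 × 𝒯 × 𝒵 → ℝ))
    (hW_nonneg : ∀ v, 0 ≤ W v)
    (hℓ_nonneg : ∀ v, 0 ≤ ℓ v)
    (hℓG : ℓ ∈ G)
    (hW_norm : ∫ v, W v * pJoint v ∂(μX.prod (μT.prod μZ)) = 1)
    (hInt_w : Integrable (fun v => ℓ v * W v * pJoint v) (μX.prod (μT.prod μZ)))
    (hInt_cf : Integrable (fun v => ℓ v * (pX v.1 * pT v.2.1 * pZ v.2.2))
      (μX.prod (μT.prod μZ)))
    (hBdd : BddAbove {r : ℝ | ∃ g ∈ G,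
      r = |∫ v, g v * (W v * pJoint v) ∂(μX.prod (μT.prod μZ))
            - ∫ v, g v * (pX v.1 * pT v.2.1 * pZ v.2.2) ∂(μX.prod (μT.prod μZ))|}) :
    -- ε_CF ≤ ε_F^w + IPM_G(W·p(X,T,Z), p(X)p(T)p(Z))
    ∫ v, ℓ v * (pX v.1 * pT v.2.1 * pZ v.2.2) ∂(μX.prod (μT.prod μZ))
      ≤ (∫ v, ℓ v * W v * pJoint v ∂(μX.prod (μT.prod μZ)))
        + sSup {r : ℝ | ∃ g ∈ G,
            r = |∫ v, g v * (W v * pJoint v) ∂(μX.prod (μT.prod μZ))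
                  - ∫ v, g v * (pX v.1 * pT v.2.1 * pZ v.2.2) ∂(μX.prod (μT.prod μZ))|} :=
  counterfactual_error_bound_general μX μT μZ pJoint pX pT pZ W ℓ G hℓG hBdd
end

section
/- The error in treatment-effect estimation between two treatment/exposure configurations is bounded by twice the sum of the individual counterfactual errors minus the noise variances: ε_{(t₁,z₁),(t₂,z₂)}(f) ≤ 2(ε_CF(t₁,z₁) − σ_{Y(t₁,z₁)}) + 2(ε_CF(t₂,z₂) − σ_{Y(t₂,z₂)}). -/
/-!
Write the error of the effect estimate as `(f₁ - m₁) - (f₂ - m₂)`: by `(a + b)² ≤ 2a² + 2b²` its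
weighted mean square is at most twice the sum of the two weighted bias terms `∫ (fₖ - mₖ)² p`,
and by the bias–variance decomposition each bias term is `ε_CF(tₖ, zₖ) - σ_{Y(tₖ, zₖ)}`.
-/

open MeasureTheory

lemma sub_sq_le_two_mul_add {R : Type*} [CommRing R] [LinearOrder R] [IsStrictOrderedRing R]
    (a b : R) : (a - b) ^ 2 ≤ 2 * a ^ 2 + 2 * b ^ 2 := by
  simpa [sub_eq_add_neg, mul_add] using add_sq_le (a := a) (b := -b)

lemma integral_sub_sq_mul_le {α : Type*} [MeasurableSpace α] {μ : Measure α} {u v w : α → ℝ}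
    (hw : 0 ≤ᵐ[μ] w) (hu : Integrable (fun x => u x ^ 2 * w x) μ)
    (hv : Integrable (fun x => v x ^ 2 * w x) μ) :
    ∫ x, (u x - v x) ^ 2 * w x ∂μ
      ≤ 2 * ∫ x, u x ^ 2 * w x ∂μ + 2 * ∫ x, v x ^ 2 * w x ∂μ := by
  rw [← integral_const_mul, ← integral_const_mul, ← integral_add (hu.const_mul 2) (hv.const_mul 2)]
  refine integral_mono_of_nonneg ?_ ((hu.const_mul 2).add (hv.const_mul 2)) ?_
  · filter_upwards [hw] with x hx using mul_nonneg (sq_nonneg _) hx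
  · filter_upwards [hw] with x hx
    nlinarith [mul_le_mul_of_nonneg_right (sub_sq_le_two_mul_add (u x) (v x)) hx]

theorem effect_error_le_two_cf_errors_general
    {𝒳 𝒯 𝒵 : Type*} [MeasurableSpace 𝒳]
    (μ : Measure 𝒳) (ν : Measure ℝ)
    (t₁ t₂ : 𝒯) (z₁ z₂ : 𝒵)
    (p : 𝒳 → ℝ) (pcond : 𝒳 → 𝒯 → 𝒵 → ℝ → ℝ)
    (f m : 𝒳 → 𝒯 → 𝒵 → ℝ)
    (hp_nonneg : ∀ x, 0 ≤ p x)
    -- bias–variance decomposition at (t₁,z₁) and (t₂,z₂)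
    (hdecomp₁ : ∫ x, (∫ y, (y - f x t₁ z₁) ^ 2 * pcond x t₁ z₁ y ∂ν) * p x ∂μ
      = (∫ x, (f x t₁ z₁ - m x t₁ z₁) ^ 2 * p x ∂μ)
        + ∫ x, (∫ y, (m x t₁ z₁ - y) ^ 2 * pcond x t₁ z₁ y ∂ν) * p x ∂μ)
    (hdecomp₂ : ∫ x, (∫ y, (y - f x t₂ z₂) ^ 2 * pcond x t₂ z₂ y ∂ν) * p x ∂μ
      = (∫ x, (f x t₂ z₂ - m x t₂ z₂) ^ 2 * p x ∂μ)
        + ∫ x, (∫ y, (m x t₂ z₂ - y) ^ 2 * pcond x t₂ z₂ y ∂ν) * p x ∂μ)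
    (hInt₁ : Integrable (fun x => (f x t₁ z₁ - m x t₁ z₁) ^ 2 * p x) μ)
    (hInt₂ : Integrable (fun x => (f x t₂ z₂ - m x t₂ z₂) ^ 2 * p x) μ) :
    ∫ x, (f x t₁ z₁ - f x t₂ z₂ - (m x t₁ z₁ - m x t₂ z₂)) ^ 2 * p x ∂μ
      ≤ 2 * ((∫ x, (∫ y, (y - f x t₁ z₁) ^ 2 * pcond x t₁ z₁ y ∂ν) * p x ∂μ)
              - ∫ x, (∫ y, (m x t₁ z₁ - y) ^ 2 * pcond x t₁ z₁ y ∂ν) * p x ∂μ)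
        + 2 * ((∫ x, (∫ y, (y - f x t₂ z₂) ^ 2 * pcond x t₂ z₂ y ∂ν) * p x ∂μ)
              - ∫ x, (∫ y, (m x t₂ z₂ - y) ^ 2 * pcond x t₂ z₂ y ∂ν) * p x ∂μ) := by
  calc ∫ x, (f x t₁ z₁ - f x t₂ z₂ - (m x t₁ z₁ - m x t₂ z₂)) ^ 2 * p x ∂μ
      = ∫ x, ((f x t₁ z₁ - m x t₁ z₁) - (f x t₂ z₂ - m x t₂ z₂)) ^ 2 * p x ∂μ := by
        congr 1 with x; ring
    _ ≤ 2 * ∫ x, (f x t₁ z₁ - m x t₁ z₁) ^ 2 * p x ∂μ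
          + 2 * ∫ x, (f x t₂ z₂ - m x t₂ z₂) ^ 2 * p x ∂μ :=
        integral_sub_sq_mul_le (.of_forall hp_nonneg) hInt₁ hInt₂
    _ = _ := by rw [hdecomp₁, hdecomp₂]; ring

/-- The treatment-effect estimation error between two treatment/exposure
configurations is bounded by twice the sum of the individual counterfactual errors
minus the noise variances:
`ε_{(t₁,z₁),(t₂,z₂)}(f) ≤ 2(ε_CF(t₁,z₁) − σ_{Y(t₁,z₁)}) + 2(ε_CF(t₂,z₂) − σ_{Y(t₂,z₂)})`. -/
theorem effect_error_le_two_cf_errors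
    {𝒳 𝒯 𝒵 : Type*} [MeasurableSpace 𝒳]
    (μ : Measure 𝒳) (ν : Measure ℝ) [SigmaFinite μ] [SigmaFinite ν]
    (t₁ t₂ : 𝒯) (z₁ z₂ : 𝒵)
    (p : 𝒳 → ℝ) (pcond : 𝒳 → 𝒯 → 𝒵 → ℝ → ℝ)
    (f m : 𝒳 → 𝒯 → 𝒵 → ℝ)
    (hp_nonneg : ∀ x, 0 ≤ p x)
    -- bias–variance decomposition at (t₁,z₁) and (t₂,z₂)
    (hdecomp₁ : ∫ x, (∫ y, (y - f x t₁ z₁) ^ 2 * pcond x t₁ z₁ y ∂ν) * p x ∂μ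
      = (∫ x, (f x t₁ z₁ - m x t₁ z₁) ^ 2 * p x ∂μ)
        + ∫ x, (∫ y, (m x t₁ z₁ - y) ^ 2 * pcond x t₁ z₁ y ∂ν) * p x ∂μ)
    (hdecomp₂ : ∫ x, (∫ y, (y - f x t₂ z₂) ^ 2 * pcond x t₂ z₂ y ∂ν) * p x ∂μ
      = (∫ x, (f x t₂ z₂ - m x t₂ z₂) ^ 2 * p x ∂μ)
        + ∫ x, (∫ y, (m x t₂ z₂ - y) ^ 2 * pcond x t₂ z₂ y ∂ν) * p x ∂μ)
    (hInt₁ : Integrable (fun x => (f x t₁ z₁ - m x t₁ z₁) ^ 2 * p x) μ)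
    (hInt₂ : Integrable (fun x => (f x t₂ z₂ - m x t₂ z₂) ^ 2 * p x) μ)
    (hMeas : AEStronglyMeasurable (fun x => (f x t₁ z₁ - f x t₂ z₂ - m x t₁ z₁ + m x t₂ z₂) ^ 2 * p x) μ) :
    ∫ x, (f x t₁ z₁ - f x t₂ z₂ - (m x t₁ z₁ - m x t₂ z₂)) ^ 2 * p x ∂μ
      ≤ 2 * ((∫ x, (∫ y, (y - f x t₁ z₁) ^ 2 * pcond x t₁ z₁ y ∂ν) * p x ∂μ)
              - ∫ x, (∫ y, (m x t₁ z₁ - y) ^ 2 * pcond x t₁ z₁ y ∂ν) * p x ∂μ)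
        + 2 * ((∫ x, (∫ y, (y - f x t₂ z₂) ^ 2 * pcond x t₂ z₂ y ∂ν) * p x ∂μ)
              - ∫ x, (∫ y, (m x t₂ z₂ - y) ^ 2 * pcond x t₂ z₂ y ∂ν) * p x ∂μ) :=
  effect_error_le_two_cf_errors_general μ ν t₁ t₂ z₁ z₂ p pcond f m hp_nonneg hdecomp₁ hdecomp₂
    hInt₁ hInt₂
end

section
/- The combined generalization bound for treatment effect estimation holds: ε_{(t₁,z₁),(t₂,z₂)}(f) ≤ 2ε_F^w(t₁,z₁) + 2·IPM_G(W₁·p(X | t₁,z₁)-weighted distribution, p(X)) + 2ε_F^w(t₂,z₂) + 2·IPM_G(W₂-weighted distribution, p(X)) − 2σ_{Y(t₁,z₁)} − 2σ_{Y(t₂,z₂)}, where the squared loss at each (t_k,z_k) lies in G. -/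
/-!
Both losses split into a bias and a variance part: `ℓ_k(x) = (f_k(x) - m_k(x))² + Var(Y_k | x)`.
Integrating against `p(x)`, the counterfactual error is the integrated squared bias plus the
integrated variance, and it exceeds the weighted factual error by at most the IPM, since
`ℓ_k ∈ G`. Finally the effect error is the integral of `((f₁ - m₁) - (f₂ - m₂))² p`, which
`(a - b)² ≤ 2a² + 2b²` bounds by twice the two integrated squared biases.
-/

open MeasureTheory

section Density

variable {ν : Measure ℝ} {p : ℝ → ℝ} {m : ℝ}

lemma integral_sub_sq_mul_density (c : ℝ)
    (h2 : Integrable (fun y => y ^ 2 * p y) ν) (h1 : Integrable (fun y => y * p y) ν)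
    (h0 : Integrable p ν) (hn : ∫ y, p y ∂ν = 1) (hm : ∫ y, y * p y ∂ν = m) :
    ∫ y, (y - c) ^ 2 * p y ∂ν = (∫ y, y ^ 2 * p y ∂ν) - 2 * c * m + c ^ 2 := by
  have hexpand : (fun y => (y - c) ^ 2 * p y)
      = fun y => (y ^ 2 * p y - 2 * c * (y * p y)) + c ^ 2 * p y := by
    funext y; ring
  have hsub : Integrable (fun y => y ^ 2 * p y - 2 * c * (y * p y)) ν := h2.sub (h1.const_mul _)
  rw [hexpand, integral_add hsub (h0.const_mul _), integral_sub h2 (h1.const_mul _),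
    integral_const_mul, integral_const_mul, hn, hm]
  ring

lemma integral_sub_sq_mul_density_eq_bias_add_variance (c : ℝ)
    (h2 : Integrable (fun y => y ^ 2 * p y) ν) (h1 : Integrable (fun y => y * p y) ν)
    (h0 : Integrable p ν) (hn : ∫ y, p y ∂ν = 1) (hm : ∫ y, y * p y ∂ν = m) :
    ∫ y, (y - c) ^ 2 * p y ∂ν = (c - m) ^ 2 + ∫ y, (m - y) ^ 2 * p y ∂ν := by
  have hsymm : (fun y => (m - y) ^ 2 * p y) = fun y => (y - m) ^ 2 * p y := by
    funext y; ring
  rw [hsymm, integral_sub_sq_mul_density c h2 h1 h0 hn hm,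
    integral_sub_sq_mul_density m h2 h1 h0 hn hm]
  ring

end Density

section Covariates

variable {𝒳 : Type*} [MeasurableSpace 𝒳] {μ : Measure 𝒳}

lemma integral_expected_sq_error_eq_bias_add_variance {ν : Measure ℝ} {pX f m : 𝒳 → ℝ}
    {pY : 𝒳 → ℝ → ℝ}
    (h2 : ∀ x, Integrable (fun y => y ^ 2 * pY x y) ν)
    (h1 : ∀ x, Integrable (fun y => y * pY x y) ν) (h0 : ∀ x, Integrable (pY x) ν)
    (hn : ∀ x, ∫ y, pY x y ∂ν = 1) (hm : ∀ x, ∫ y, y * pY x y ∂ν = m x)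
    (hbias : Integrable (fun x => (f x - m x) ^ 2 * pX x) μ)
    (hvar : Integrable (fun x => (∫ y, (m x - y) ^ 2 * pY x y ∂ν) * pX x) μ) :
    ∫ x, (∫ y, (y - f x) ^ 2 * pY x y ∂ν) * pX x ∂μ
      = (∫ x, (f x - m x) ^ 2 * pX x ∂μ) + ∫ x, (∫ y, (m x - y) ^ 2 * pY x y ∂ν) * pX x ∂μ := by
  simp only [fun x => integral_sub_sq_mul_density_eq_bias_add_variance (f x) (h2 x) (h1 x)
    (h0 x) (hn x) (hm x), add_mul]
  exact integral_add hbias hvar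

noncomputable def ipm (μ : Measure 𝒳) (G : Set (𝒳 → ℝ)) (q p : 𝒳 → ℝ) : ℝ :=
  sSup {r : ℝ | ∃ g ∈ G, r = |(∫ x, g x * q x ∂μ) - ∫ x, g x * p x ∂μ|}

lemma integral_mul_le_integral_mul_add_ipm {G : Set (𝒳 → ℝ)} {g q p : 𝒳 → ℝ} (hg : g ∈ G)
    (hbdd : BddAbove {r : ℝ | ∃ g ∈ G, r = |(∫ x, g x * q x ∂μ) - ∫ x, g x * p x ∂μ|}) :
    ∫ x, g x * p x ∂μ ≤ (∫ x, g x * q x ∂μ) + ipm μ G q p := by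
  have hle := le_csSup hbdd ⟨g, hg, rfl⟩
  unfold ipm
  linarith [neg_abs_le ((∫ x, g x * q x ∂μ) - ∫ x, g x * p x ∂μ)]

lemma integral_sub_sq_mul_le_s13 {a b p : 𝒳 → ℝ} (hp : ∀ᵐ x ∂μ, 0 ≤ p x)
    (ha : Integrable (fun x => a x ^ 2 * p x) μ) (hb : Integrable (fun x => b x ^ 2 * p x) μ)
    (hmeas : AEStronglyMeasurable (fun x => (a x - b x) ^ 2 * p x) μ) :
    ∫ x, (a x - b x) ^ 2 * p x ∂μ ≤ 2 * (∫ x, a x ^ 2 * p x ∂μ) + 2 * ∫ x, b x ^ 2 * p x ∂μ := by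
  have hsum : Integrable (fun x => 2 * (a x ^ 2 * p x) + 2 * (b x ^ 2 * p x)) μ :=
    (ha.const_mul 2).add (hb.const_mul 2)
  have hpt : ∀ᵐ x ∂μ, (a x - b x) ^ 2 * p x ≤ 2 * (a x ^ 2 * p x) + 2 * (b x ^ 2 * p x) := by
    filter_upwards [hp] with x hx
    nlinarith [mul_nonneg (sq_nonneg (a x + b x)) hx]
  have hint : Integrable (fun x => (a x - b x) ^ 2 * p x) μ := by
    refine hsum.mono' hmeas ?_
    filter_upwards [hp, hpt] with x hx hle
    rwa [Real.norm_eq_abs, abs_of_nonneg (mul_nonneg (sq_nonneg _) hx)]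
  calc ∫ x, (a x - b x) ^ 2 * p x ∂μ
      ≤ ∫ x, 2 * (a x ^ 2 * p x) + 2 * (b x ^ 2 * p x) ∂μ := integral_mono_ae hint hsum hpt
    _ = 2 * (∫ x, a x ^ 2 * p x ∂μ) + 2 * ∫ x, b x ^ 2 * p x ∂μ := by
      rw [integral_add (ha.const_mul 2) (hb.const_mul 2), integral_const_mul, integral_const_mul]

end Covariates

theorem generalization_bound_effect_estimation_general
    {𝒳 : Type*} [MeasurableSpace 𝒳]
    (μ : Measure 𝒳) (ν : Measure ℝ)
    (pX : 𝒳 → ℝ)                       -- covariate density p(x)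
    (pcond₁ pcond₂ : 𝒳 → ℝ)            -- conditional covariate densities p(x | t_k, z_k)
    (W₁ W₂ : 𝒳 → ℝ)                    -- weights W_k(x) = p(x)/p(x|t_k,z_k)
    (pY₁ pY₂ : 𝒳 → ℝ → ℝ)              -- conditional outcome densities p(y(t_k,z_k)|x)
    (f₁ f₂ m₁ m₂ : 𝒳 → ℝ)              -- predictions and conditional means at (t_k,z_k)
    (ℓ₁ ℓ₂ : 𝒳 → ℝ)                    -- squared-error losses at (t_k,z_k)
    (G : Set (𝒳 → ℝ))
    (hpX_nonneg : ∀ x, 0 ≤ pX x)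
    (hℓ₁ : ∀ x, ℓ₁ x = ∫ y, (y - f₁ x) ^ 2 * pY₁ x y ∂ν)
    (hℓ₂ : ∀ x, ℓ₂ x = ∫ y, (y - f₂ x) ^ 2 * pY₂ x y ∂ν)
    (hℓ₁G : ℓ₁ ∈ G) (hℓ₂G : ℓ₂ ∈ G)
    -- conditional outcome densities are normalized with conditional means m_k
    (hnorm₁ : ∀ x, ∫ y, pY₁ x y ∂ν = 1) (hnorm₂ : ∀ x, ∫ y, pY₂ x y ∂ν = 1)
    (hmean₁ : ∀ x, ∫ y, y * pY₁ x y ∂ν = m₁ x) (hmean₂ : ∀ x, ∫ y, y * pY₂ x y ∂ν = m₂ x)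
    (hIntY₁ : ∀ x, Integrable (fun y => y ^ 2 * pY₁ x y) ν)
    (hIntY₂ : ∀ x, Integrable (fun y => y ^ 2 * pY₂ x y) ν)
    (hIntY₁' : ∀ x, Integrable (fun y => y * pY₁ x y) ν)
    (hIntY₂' : ∀ x, Integrable (fun y => y * pY₂ x y) ν)
    (hIntY₁'' : ∀ x, Integrable (fun y => pY₁ x y) ν)
    (hIntY₂'' : ∀ x, Integrable (fun y => pY₂ x y) ν)
    -- integrability over covariates
    (hInt_bias₁ : Integrable (fun x => (f₁ x - m₁ x) ^ 2 * pX x) μ)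
    (hInt_bias₂ : Integrable (fun x => (f₂ x - m₂ x) ^ 2 * pX x) μ)
    (hInt_var₁ : Integrable (fun x => (∫ y, (m₁ x - y) ^ 2 * pY₁ x y ∂ν) * pX x) μ)
    (hInt_var₂ : Integrable (fun x => (∫ y, (m₂ x - y) ^ 2 * pY₂ x y ∂ν) * pX x) μ)
    (hMeas : AEStronglyMeasurable (fun x => (f₁ x - f₂ x - m₁ x + m₂ x) ^ 2 * pX x) μ)
    (hBdd₁ : BddAbove {r : ℝ | ∃ g ∈ G,
      r = |(∫ x, g x * (W₁ x * pcond₁ x) ∂μ) - ∫ x, g x * pX x ∂μ|})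
    (hBdd₂ : BddAbove {r : ℝ | ∃ g ∈ G,
      r = |(∫ x, g x * (W₂ x * pcond₂ x) ∂μ) - ∫ x, g x * pX x ∂μ|}) :
    ∫ x, (f₁ x - f₂ x - m₁ x + m₂ x) ^ 2 * pX x ∂μ
      ≤ 2 * (∫ x, ℓ₁ x * W₁ x * pcond₁ x ∂μ)
        + 2 * sSup {r : ℝ | ∃ g ∈ G,
            r = |(∫ x, g x * (W₁ x * pcond₁ x) ∂μ) - ∫ x, g x * pX x ∂μ|}
        + 2 * (∫ x, ℓ₂ x * W₂ x * pcond₂ x ∂μ)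
        + 2 * sSup {r : ℝ | ∃ g ∈ G,
            r = |(∫ x, g x * (W₂ x * pcond₂ x) ∂μ) - ∫ x, g x * pX x ∂μ|}
        - 2 * (∫ x, (∫ y, (m₁ x - y) ^ 2 * pY₁ x y ∂ν) * pX x ∂μ)
        - 2 * (∫ x, (∫ y, (m₂ x - y) ^ 2 * pY₂ x y ∂ν) * pX x ∂μ) := by
  have hcf₁ : ∫ x, ℓ₁ x * pX x ∂μ = (∫ x, (f₁ x - m₁ x) ^ 2 * pX x ∂μ)
      + ∫ x, (∫ y, (m₁ x - y) ^ 2 * pY₁ x y ∂ν) * pX x ∂μ := by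
    simp only [hℓ₁]
    exact integral_expected_sq_error_eq_bias_add_variance hIntY₁ hIntY₁' hIntY₁'' hnorm₁ hmean₁
      hInt_bias₁ hInt_var₁
  have hcf₂ : ∫ x, ℓ₂ x * pX x ∂μ = (∫ x, (f₂ x - m₂ x) ^ 2 * pX x ∂μ)
      + ∫ x, (∫ y, (m₂ x - y) ^ 2 * pY₂ x y ∂ν) * pX x ∂μ := by
    simp only [hℓ₂]
    exact integral_expected_sq_error_eq_bias_add_variance hIntY₂ hIntY₂' hIntY₂'' hnorm₂ hmean₂
      hInt_bias₂ hInt_var₂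
  have hipm₁ : ∫ x, ℓ₁ x * pX x ∂μ
      ≤ (∫ x, ℓ₁ x * W₁ x * pcond₁ x ∂μ) + ipm μ G (fun x => W₁ x * pcond₁ x) pX := by
    simpa only [mul_assoc] using integral_mul_le_integral_mul_add_ipm hℓ₁G hBdd₁
  have hipm₂ : ∫ x, ℓ₂ x * pX x ∂μ
      ≤ (∫ x, ℓ₂ x * W₂ x * pcond₂ x ∂μ) + ipm μ G (fun x => W₂ x * pcond₂ x) pX := by
    simpa only [mul_assoc] using integral_mul_le_integral_mul_add_ipm hℓ₂G hBdd₂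
  have hregroup : ∀ x, f₁ x - f₂ x - m₁ x + m₂ x = (f₁ x - m₁ x) - (f₂ x - m₂ x) :=
    fun x => by ring
  simp only [hregroup] at hMeas ⊢
  have heffect := integral_sub_sq_mul_le_s13 (ae_of_all μ hpX_nonneg) hInt_bias₁ hInt_bias₂ hMeas
  unfold ipm at hipm₁ hipm₂
  linarith

/-- Combined generalization bound for treatment-effect estimation:
`ε_{(t₁,z₁),(t₂,z₂)}(f) ≤ 2ε_F^w(t₁,z₁) + 2·IPM_G(W₁·p(X|t₁,z₁), p(X))
  + 2ε_F^w(t₂,z₂) + 2·IPM_G(W₂·p(X|t₂,z₂), p(X)) − 2σ_{Y(t₁,z₁)} − 2σ_{Y(t₂,z₂)}`,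
where the squared-error losses `ℓ(·,t_k,z_k)` belong to the class `G`. -/
theorem generalization_bound_effect_estimation
    {𝒳 : Type*} [MeasurableSpace 𝒳]
    (μ : Measure 𝒳) (ν : Measure ℝ) [SigmaFinite μ] [SigmaFinite ν]
    (pX : 𝒳 → ℝ)                       -- covariate density p(x)
    (pcond₁ pcond₂ : 𝒳 → ℝ)            -- conditional covariate densities p(x | t_k, z_k)
    (W₁ W₂ : 𝒳 → ℝ)                    -- weights W_k(x) = p(x)/p(x|t_k,z_k)
    (pY₁ pY₂ : 𝒳 → ℝ → ℝ)              -- conditional outcome densities p(y(t_k,z_k)|x)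
    (f₁ f₂ m₁ m₂ : 𝒳 → ℝ)              -- predictions and conditional means at (t_k,z_k)
    (ℓ₁ ℓ₂ : 𝒳 → ℝ)                    -- squared-error losses at (t_k,z_k)
    (G : Set (𝒳 → ℝ))
    (hpX_nonneg : ∀ x, 0 ≤ pX x)
    (hW₁ : ∀ x, W₁ x = pX x / pcond₁ x) (hW₂ : ∀ x, W₂ x = pX x / pcond₂ x)
    (hℓ₁ : ∀ x, ℓ₁ x = ∫ y, (y - f₁ x) ^ 2 * pY₁ x y ∂ν)
    (hℓ₂ : ∀ x, ℓ₂ x = ∫ y, (y - f₂ x) ^ 2 * pY₂ x y ∂ν)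
    (hℓ₁G : ℓ₁ ∈ G) (hℓ₂G : ℓ₂ ∈ G)
    -- conditional outcome densities are normalized with conditional means m_k
    (hnorm₁ : ∀ x, ∫ y, pY₁ x y ∂ν = 1) (hnorm₂ : ∀ x, ∫ y, pY₂ x y ∂ν = 1)
    (hmean₁ : ∀ x, ∫ y, y * pY₁ x y ∂ν = m₁ x) (hmean₂ : ∀ x, ∫ y, y * pY₂ x y ∂ν = m₂ x)
    (hIntY₁ : ∀ x, Integrable (fun y => y ^ 2 * pY₁ x y) ν)
    (hIntY₂ : ∀ x, Integrable (fun y => y ^ 2 * pY₂ x y) ν)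
    (hIntY₁' : ∀ x, Integrable (fun y => y * pY₁ x y) ν)
    (hIntY₂' : ∀ x, Integrable (fun y => y * pY₂ x y) ν)
    (hIntY₁'' : ∀ x, Integrable (fun y => pY₁ x y) ν)
    (hIntY₂'' : ∀ x, Integrable (fun y => pY₂ x y) ν)
    -- integrability over covariates
    (hInt_cf₁ : Integrable (fun x => ℓ₁ x * pX x) μ)
    (hInt_cf₂ : Integrable (fun x => ℓ₂ x * pX x) μ)
    (hInt_bias₁ : Integrable (fun x => (f₁ x - m₁ x) ^ 2 * pX x) μ)
    (hInt_bias₂ : Integrable (fun x => (f₂ x - m₂ x) ^ 2 * pX x) μ)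
    (hInt_var₁ : Integrable (fun x => (∫ y, (m₁ x - y) ^ 2 * pY₁ x y ∂ν) * pX x) μ)
    (hInt_var₂ : Integrable (fun x => (∫ y, (m₂ x - y) ^ 2 * pY₂ x y ∂ν) * pX x) μ)
    (hInt_w₁ : Integrable (fun x => ℓ₁ x * W₁ x * pcond₁ x) μ)
    (hInt_w₂ : Integrable (fun x => ℓ₂ x * W₂ x * pcond₂ x) μ)
    (hMeas : AEStronglyMeasurable (fun x => (f₁ x - f₂ x - m₁ x + m₂ x) ^ 2 * pX x) μ)
    (hIntG : ∀ g ∈ G, Integrable (fun x => g x * (W₁ x * pcond₁ x)) μ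
      ∧ Integrable (fun x => g x * (W₂ x * pcond₂ x)) μ
      ∧ Integrable (fun x => g x * pX x) μ)
    (hBdd₁ : BddAbove {r : ℝ | ∃ g ∈ G,
      r = |(∫ x, g x * (W₁ x * pcond₁ x) ∂μ) - ∫ x, g x * pX x ∂μ|})
    (hBdd₂ : BddAbove {r : ℝ | ∃ g ∈ G,
      r = |(∫ x, g x * (W₂ x * pcond₂ x) ∂μ) - ∫ x, g x * pX x ∂μ|}) :
    ∫ x, (f₁ x - f₂ x - m₁ x + m₂ x) ^ 2 * pX x ∂μ
      ≤ 2 * (∫ x, ℓ₁ x * W₁ x * pcond₁ x ∂μ)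
        + 2 * sSup {r : ℝ | ∃ g ∈ G,
            r = |(∫ x, g x * (W₁ x * pcond₁ x) ∂μ) - ∫ x, g x * pX x ∂μ|}
        + 2 * (∫ x, ℓ₂ x * W₂ x * pcond₂ x ∂μ)
        + 2 * sSup {r : ℝ | ∃ g ∈ G,
            r = |(∫ x, g x * (W₂ x * pcond₂ x) ∂μ) - ∫ x, g x * pX x ∂μ|}
        - 2 * (∫ x, (∫ y, (m₁ x - y) ^ 2 * pY₁ x y ∂ν) * pX x ∂μ)
        - 2 * (∫ x, (∫ y, (m₂ x - y) ^ 2 * pY₂ x y ∂ν) * pX x ∂μ) :=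
  generalization_bound_effect_estimation_general μ ν pX pcond₁ pcond₂ W₁ W₂ pY₁ pY₂ f₁ f₂ m₁ m₂ ℓ₁
    ℓ₂ G hpX_nonneg hℓ₁ hℓ₂ hℓ₁G hℓ₂G hnorm₁ hnorm₂ hmean₁ hmean₂ hIntY₁ hIntY₂ hIntY₁' hIntY₂'
    hIntY₁'' hIntY₂'' hInt_bias₁ hInt_bias₂ hInt_var₁ hInt_var₂ hMeas hBdd₁ hBdd₂
end
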